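/- Let K be an odd positive integer, let γ : {0,…,K} → ℝ satisfy γ(l) = γ(K−l) for all l, and let α : {0,…,K} → ℝ be arbitrary. Then Σ_{l=(K+1)/2}^{K} α_l − Σ_{l=0}^{K} ( γ(l)·1{l ≥ (K+1)/2} + (1 − γ(l))/2 ) · α_l = (1/2) Σ_{l=(K+1)/2}^{K} (1 − γ(l)) (α_l − α_{K−l}). In particular, when (α_l) is the probability mass function of the sum of K binary outcomes, the error of DaRRM with symmetric noise function γ equals |(1/2) Σ_{l=(K+1)/2}^{K} (1 − γ(l)) (α_l − α_{K−l})|, which is an affine function of the values γ((K+1)/2), …, γ(K). -/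

import Mathlib

open Finset

/-! Pair each `l ≥ (K + 1) / 2` with its reflection `K - l`: the majority indicator is `1` at `l`
and `0` at `K - l`, while `γ` takes the same value at both, so the pair contributes exactly
`(1 - γ l) (α l - α (K - l)) / 2` to the difference. -/

theorem Finset.sum_range_eq_sum_Icc_add_reflect {M : Type*} [AddCommMonoid M] {K : ℕ}
    (hK : Odd K) (f : ℕ → M) :
    ∑ l ∈ range (K + 1), f l = ∑ l ∈ Icc ((K + 1) / 2) K, (f l + f (K - l)) := by
  obtain ⟨t, rfl⟩ := hK
  have hmid : (2 * t + 1 + 1) / 2 = t + 1 := by omega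
  have hlower : ∑ l ∈ Icc (t + 1) (2 * t + 1), f (2 * t + 1 - l) = ∑ l ∈ range (t + 1), f l := by
    rw [← Ico_add_one_right_eq_Icc, sum_Ico_reflect f _ le_rfl, Nat.sub_self,
      show 2 * t + 1 + 1 - (t + 1) = t + 1 by omega, Nat.Ico_zero_eq_range]
  rw [hmid, sum_add_distrib, hlower, ← Ico_add_one_right_eq_Icc,
    ← sum_range_add_sum_Ico f (show t + 1 ≤ 2 * t + 1 + 1 by omega), add_comm]

theorem statement15 (K : ℕ) (hK : Odd K)
    (γ α : ℕ → ℝ) (hγsym : ∀ l ≤ K, γ l = γ (K - l)) :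
    (∑ l ∈ Finset.Icc ((K + 1) / 2) K, α l)
      - ∑ l ∈ Finset.range (K + 1),
          (γ l * (if (K + 1) / 2 ≤ l then (1 : ℝ) else 0) + (1 - γ l) / 2) * α l
    = (1 / 2) * ∑ l ∈ Finset.Icc ((K + 1) / 2) K, (1 - γ l) * (α l - α (K - l)) := by
  rw [sum_range_eq_sum_Icc_add_reflect hK, ← sum_sub_distrib, mul_sum]
  refine sum_congr rfl fun l hl => ?_
  obtain ⟨hmid_le, hle⟩ := mem_Icc.mp hl
  have hreflect_below : ¬ (K + 1) / 2 ≤ K - l := by obtain ⟨t, rfl⟩ := hK; omega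
  have hγ : γ (K - l) = γ l := by rw [hγsym _ (Nat.sub_le K l), Nat.sub_sub_self hle]
  rw [if_pos hmid_le, if_neg hreflect_below, hγ]
  ring
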